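/- If a polynomial P in variables (A, B, B₂, B₃) (with parameter X) satisfies the first-order PDE [−2∂/∂A + ∂/∂B + (A+1+2B)∂/∂B₂ + ((B+5X)(1+A+2B) − B₂ − 10X)∂/∂B₃] P = 0, then after the change of variables u = B, v₁ = A+1+2B, v₂ = B₂ − B(A+1+2B), v₃ = B₃ − B(B(1+A+2B) − B₂ + 5X(1+A+2B) − 10X), the function P expressed in (u, v₁, v₂, v₃, X) satisfies ∂P/∂u = 0; i.e., P depends only on v₁, v₂, v₃, X. -/

import Mathlib

/-!
Inverting the change of variables, fixing `(v₁, v₂, v₃)` gives the curve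
`u ↦ (v₁ - 1 - 2u, u, v₂ + u v₁, v₃ + u (5X(v₁ - 2) - v₂))`, which is an integral curve of
the vector field of the PDE. By the chain rule, the derivative of `P` along it is the
derivative of `P` in the direction of the field, which vanishes.
-/

def anomalyField (X : ℝ) : ℝ × ℝ × ℝ × ℝ → ℝ × ℝ × ℝ × ℝ
  | (A, B, B2, _) => (-2, 1, A + 1 + 2 * B, (B + 5 * X) * (1 + A + 2 * B) - B2 - 10 * X)

theorem ContinuousLinearMap.apply_prod4 {𝕜 F : Type*} [NontriviallyNormedField 𝕜]
    [NormedAddCommGroup F] [NormedSpace 𝕜 F] (L : 𝕜 × 𝕜 × 𝕜 × 𝕜 →L[𝕜] F) (a b c d : 𝕜) :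
    L (a, b, c, d) = a • L (1, 0, 0, 0) + b • L (0, 1, 0, 0) + c • L (0, 0, 1, 0)
      + d • L (0, 0, 0, 1) := by
  simp only [← map_smul, ← map_add, Prod.smul_mk, Prod.mk_add_mk, smul_eq_mul, mul_one,
    mul_zero, add_zero, zero_add]

theorem fderiv_apply_anomalyField_eq_zero {X : ℝ} {P : ℝ × ℝ × ℝ × ℝ → ℝ}
    (hPDE : ∀ A B B2 B3 : ℝ,
      -2 * fderiv ℝ P (A, B, B2, B3) (1, 0, 0, 0)
        + fderiv ℝ P (A, B, B2, B3) (0, 1, 0, 0)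
        + (A + 1 + 2 * B) * fderiv ℝ P (A, B, B2, B3) (0, 0, 1, 0)
        + ((B + 5 * X) * (1 + A + 2 * B) - B2 - 10 * X)
            * fderiv ℝ P (A, B, B2, B3) (0, 0, 0, 1) = 0)
    (p : ℝ × ℝ × ℝ × ℝ) : fderiv ℝ P p (anomalyField X p) = 0 := by
  obtain ⟨A, B, B2, B3⟩ := p
  rw [anomalyField, ContinuousLinearMap.apply_prod4]
  simpa only [smul_eq_mul, one_mul] using hPDE A B B2 B3

theorem hasDerivAt_anomalyField_characteristic (X v1 v2 v3 u : ℝ) :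
    HasDerivAt (fun u : ℝ =>
        ((v1 - 1 - 2 * u, u, v2 + u * v1, v3 + u * (-v2 + 5 * X * (v1 - 2))) :
          ℝ × ℝ × ℝ × ℝ))
      (anomalyField X (v1 - 1 - 2 * u, u, v2 + u * v1, v3 + u * (-v2 + 5 * X * (v1 - 2))))
      u := by
  have hline : ∀ a b : ℝ, HasDerivAt (fun u : ℝ => a + u * b) b u := fun a b => by
    simpa using ((hasDerivAt_id u).mul_const b).const_add a
  have hA : HasDerivAt (fun u : ℝ => v1 - 1 - 2 * u) (-2) u := by
    simpa [sub_eq_add_neg, mul_comm] using hline (v1 - 1) (-2)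
  convert hA.prodMk ((hasDerivAt_id' u).prodMk
    ((hline v2 v1).prodMk (hline v3 (-v2 + 5 * X * (v1 - 2))))) using 1
  show ((_, _, _, _) : ℝ × ℝ × ℝ × ℝ) = _
  simp only [Prod.mk.injEq, true_and]
  constructor <;> ring

theorem pde_implies_u_independent (X : ℝ) (P : ℝ × ℝ × ℝ × ℝ → ℝ)
    (hP : Differentiable ℝ P)
    (hPDE : ∀ A B B2 B3 : ℝ,
      -2 * fderiv ℝ P (A, B, B2, B3) (1, 0, 0, 0)
        + fderiv ℝ P (A, B, B2, B3) (0, 1, 0, 0)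
        + (A + 1 + 2 * B) * fderiv ℝ P (A, B, B2, B3) (0, 0, 1, 0)
        + ((B + 5 * X) * (1 + A + 2 * B) - B2 - 10 * X)
            * fderiv ℝ P (A, B, B2, B3) (0, 0, 0, 1) = 0) :
    ∀ u v1 v2 v3 : ℝ,
      deriv (fun u : ℝ =>
        P (v1 - 1 - 2 * u, u, v2 + u * v1, v3 + u * (-v2 + 5 * X * (v1 - 2)))) u = 0 := by
  intro u v1 v2 v3
  have hchain := (hP _).hasFDerivAt.comp_hasDerivAt u
    (hasDerivAt_anomalyField_characteristic X v1 v2 v3 u)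
  exact hchain.deriv.trans (fderiv_apply_anomalyField_eq_zero hPDE _)
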